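/- Let A ∈ GL_n(ℂ) with AᵀA diagonal. Fix a selection of v rows and v columns; let A_(v) and A^(v) be the corresponding complementary square submatrices, and let Ā_(v) (resp. Ā^(v)) be the n×v (resp. n×(n−v)) submatrix of A on the selected v (resp. complementary n−v) columns. Then the rows of A_(v) form a ℤ-basis for the ℤ-span of the rows of Ā_(v) if and only if the rows of A^(v) form a ℤ-basis for the ℤ-span of the rows of Ā^(v). -/

import Mathlib

/-!
Reorder rows and columns so that `A = [[B, C], [D, E]]` with `B = A_(v)` and `E = A^(v)`;
diagonality of `AᵀA` gives `BᵀC + DᵀE = 0`. If the rows of `D` are integer combinations of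
those of `B`, say `D = M B`, then `B` is invertible (the columns of `[B; D]` are independent),
and the orthogonality relation turns into `C = -Mᵀ E`. Hence `E` is invertible too and the rows
of `C` are integer combinations of those of `E`. The converse is the same argument with the
roles of the two diagonal blocks exchanged.
-/

open Matrix Submodule Set

def IsBasicSet (R : Type*) {ι M : Type*} [Semiring R] [AddCommMonoid M] [Module R M]
    (v : ι → M) (s : Set M) : Prop :=
  LinearIndependent R v ∧ span R (range v) = span R s

theorem span_range_eq_span_range_union_iff {R ι M : Type*} [Semiring R] [AddCommMonoid M]
    [Module R M] {v : ι → M} {t : Set M} :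
    span R (range v) = span R (range v ∪ t) ↔ t ⊆ span R (range v) := by
  rw [span_union, left_eq_sup, span_le]

namespace Matrix

section Blocks

variable {m l p q α : Type*}

theorem range_toCols₁ (A : Matrix (m ⊕ l) (p ⊕ q) α) :
    range A.toCols₁ = range A.toBlocks₁₁ ∪ range A.toBlocks₂₁ :=
  (congrArg range (funext fun r => by cases r <;> rfl)).trans (Sum.elim_range _ _)

theorem range_toCols₂ (A : Matrix (m ⊕ l) (p ⊕ q) α) :
    range A.toCols₂ = range A.toBlocks₂₂ ∪ range A.toBlocks₁₂ := by
  rw [union_comm]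
  exact (congrArg range (funext fun r => by cases r <;> rfl)).trans (Sum.elim_range _ _)

theorem toBlocks₁₂_transpose_mul [Fintype m] [Fintype l] [NonUnitalNonAssocSemiring α]
    (A : Matrix (m ⊕ l) (p ⊕ q) α) :
    (Aᵀ * A).toBlocks₁₂ = A.toBlocks₁₁ᵀ * A.toBlocks₁₂ + A.toBlocks₂₁ᵀ * A.toBlocks₂₂ := by
  conv_lhs => rw [← fromBlocks_toBlocks A, fromBlocks_transpose, fromBlocks_multiply]
  rfl

end Blocks

variable {R K : Type*} [CommRing R] [Field K] [Algebra R K] {m l n : Type*} [Fintype m]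

theorem map_algebraMap_mul_apply (M : Matrix l m R) (B : Matrix m n K) (b : l) :
    (M.map (algebraMap R K) * B) b = ∑ a, M b a • B a := by
  simp only [mul_apply_eq_vecMul, vecMul_eq_sum, map_apply, algebraMap_smul]

theorem rows_mem_span_rows_iff_exists_eq_mul {D : Matrix l n K} {B : Matrix m n K} :
    (∀ b, D b ∈ span R (range B)) ↔ ∃ M : Matrix l m R, D = M.map (algebraMap R K) * B := by
  constructor
  · intro h
    choose M hM using fun b => (mem_span_range_iff_exists_fun R).mp (h b)
    exact ⟨M, funext fun b => (hM b).symm.trans (map_algebraMap_mul_apply M B b).symm⟩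
  · rintro ⟨M, rfl⟩ b
    exact (mem_span_range_iff_exists_fun R).mpr ⟨M b, (map_algebraMap_mul_apply M B b).symm⟩

variable [DecidableEq m]

theorem isUnit_of_eq_mul_of_ker {B : Matrix m m K} {D : Matrix l m K} {M : Matrix l m K}
    (hker : ∀ y, B *ᵥ y = 0 → D *ᵥ y = 0 → y = 0) (hD : D = M * B) : IsUnit B := by
  refine mulVec_injective_iff_isUnit.mp fun x y hxy => sub_eq_zero.mp (hker _ ?_ ?_)
  · rw [mulVec_sub, hxy, sub_self]
  · rw [hD, ← mulVec_mulVec, mulVec_sub, hxy, sub_self, mulVec_zero]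

variable [Fintype l]

theorem eq_neg_transpose_mul_of_transpose_mul_add_eq_zero {B : Matrix m m K} {C : Matrix m l K}
    {D : Matrix l m K} {E : Matrix l l K} {M : Matrix l m K} (hB : IsUnit B)
    (horth : Bᵀ * C + Dᵀ * E = 0) (hD : D = M * B) : C = -(Mᵀ * E) := by
  have : Invertible Bᵀ := ((isUnit_transpose B).mpr hB).invertible
  refine mul_right_injective_of_invertible Bᵀ ?_
  rw [hD, transpose_mul, Matrix.mul_assoc] at horth
  simp only [Matrix.mul_neg, eq_neg_of_add_eq_zero_left horth]

variable [DecidableEq l]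

theorem isBasicSet_of_rows_mem_span [FaithfulSMul R K] {B : Matrix m m K} {C : Matrix m l K}
    {D : Matrix l m K} {E : Matrix l l K} (hBD : ∀ y, B *ᵥ y = 0 → D *ᵥ y = 0 → y = 0)
    (hEC : ∀ y, E *ᵥ y = 0 → C *ᵥ y = 0 → y = 0) (horth : Bᵀ * C + Dᵀ * E = 0)
    (hspan : ∀ b, D b ∈ span R (range B)) : IsBasicSet R E (range E ∪ range C) := by
  obtain ⟨M, hD⟩ := rows_mem_span_rows_iff_exists_eq_mul.mp hspan
  have hC : C = (-Mᵀ).map (algebraMap R K) * E := by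
    rw [eq_neg_transpose_mul_of_transpose_mul_add_eq_zero (isUnit_of_eq_mul_of_ker hBD hD)
      horth hD, Matrix.map_neg _ (map_neg _), transpose_map, Matrix.neg_mul]
  have hE : IsUnit E := isUnit_of_eq_mul_of_ker hEC hC
  refine ⟨(linearIndependent_rows_iff_isUnit.mpr hE).restrict_scalars' R, ?_⟩
  exact span_range_eq_span_range_union_iff.mpr
    (range_subset_iff.mpr (rows_mem_span_rows_iff_exists_eq_mul.mpr ⟨_, hC⟩))

section SquareBlocks

variable {A : Matrix (m ⊕ l) (m ⊕ l) K}

theorem eq_zero_of_mulVec_toBlocks₁₁_of_mulVec_toBlocks₂₁ (hA : IsUnit A) (y : m → K)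
    (h₁ : A.toBlocks₁₁ *ᵥ y = 0) (h₂ : A.toBlocks₂₁ *ᵥ y = 0) : y = 0 := by
  have : A *ᵥ Sum.elim y 0 = A *ᵥ 0 := by
    rw [← fromBlocks_toBlocks A, fromBlocks_mulVec]
    simp [h₁, h₂]
  exact funext fun a => congrFun (mulVec_injective_iff_isUnit.mpr hA this) (Sum.inl a)

theorem eq_zero_of_mulVec_toBlocks₂₂_of_mulVec_toBlocks₁₂ (hA : IsUnit A) (y : l → K)
    (h₁ : A.toBlocks₂₂ *ᵥ y = 0) (h₂ : A.toBlocks₁₂ *ᵥ y = 0) : y = 0 := by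
  have : A *ᵥ Sum.elim 0 y = A *ᵥ 0 := by
    rw [← fromBlocks_toBlocks A, fromBlocks_mulVec]
    simp [h₁, h₂]
  exact funext fun a => congrFun (mulVec_injective_iff_isUnit.mpr hA this) (Sum.inr a)

theorem isBasicSet_toBlocks₁₁_iff_isBasicSet_toBlocks₂₂ [FaithfulSMul R K] (hA : IsUnit A)
    (horth : (Aᵀ * A).toBlocks₁₂ = 0) :
    IsBasicSet R A.toBlocks₁₁ (range A.toCols₁) ↔ IsBasicSet R A.toBlocks₂₂ (range A.toCols₂) := by
  rw [toBlocks₁₂_transpose_mul] at horth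
  have horth' : A.toBlocks₂₂ᵀ * A.toBlocks₂₁ + A.toBlocks₁₂ᵀ * A.toBlocks₁₁ = 0 := by
    simpa [transpose_add, transpose_mul, add_comm] using congrArg transpose horth
  have hker₁ := eq_zero_of_mulVec_toBlocks₁₁_of_mulVec_toBlocks₂₁ hA
  have hker₂ := eq_zero_of_mulVec_toBlocks₂₂_of_mulVec_toBlocks₁₂ hA
  rw [range_toCols₁, range_toCols₂]
  constructor
  · intro h
    exact isBasicSet_of_rows_mem_span hker₁ hker₂ horth
      (range_subset_iff.mp (span_range_eq_span_range_union_iff.mp h.2))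
  · intro h
    exact isBasicSet_of_rows_mem_span hker₂ hker₁ horth'
      (range_subset_iff.mp (span_range_eq_span_range_union_iff.mp h.2))

end SquareBlocks

end Matrix
/-- **Theorem 2.4.** Let `A ∈ GL_n(ℂ)` with `Aᵀ A` diagonal.  Select `v` rows and `v` columns
(via orderings `i, k` of the rows and columns, the selected ones being the first `v`); let
`A_(v)` and `A^(v)` be the corresponding complementary square submatrices, and let `Ā_(v)`
(resp. `Ā^(v)`) be the `n × v` (resp. `n × (n-v)`) submatrix of `A` on the selected
(resp. complementary) columns.  Then the rows of `A_(v)` form a ℤ-basis for the ℤ-span of the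
rows of `Ā_(v)` if and only if the rows of `A^(v)` form a ℤ-basis for the ℤ-span of the rows
of `Ā^(v)`. -/
theorem basic_set_duality (n v : ℕ) (hv : v ≤ n)
    (A : Matrix (Fin n) (Fin n) ℂ) (hA : IsUnit A.det)
    (z : Fin n → ℂ) (hdiag : Aᵀ * A = Matrix.diagonal z)
    (i k : Equiv.Perm (Fin n))
    -- the rows of `Ā_(v)` (all rows of `A`, restricted to the selected columns)
    (barSel : Fin n → Fin v → ℂ)
    (hbarSel : barSel = fun r c => A r (k (Fin.castLE hv c)))
    -- the rows of `Ā^(v)` (all rows of `A`, restricted to the complementary columns)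
    (barComp : Fin n → Fin (n - v) → ℂ)
    (hbarComp : barComp = fun r c => A r (k ⟨v + c.1, by omega⟩)) :
    -- rows of `A_(v)` are a basic set for the rows of `Ā_(v)` …
    ((LinearIndependent ℤ fun a : Fin v => barSel (i (Fin.castLE hv a))) ∧
      Submodule.span ℤ (Set.range fun a : Fin v => barSel (i (Fin.castLE hv a))) =
        Submodule.span ℤ (Set.range barSel)) ↔
    -- … iff rows of `A^(v)` are a basic set for the rows of `Ā^(v)`
    ((LinearIndependent ℤ fun a : Fin (n - v) => barComp (i ⟨v + a.1, by omega⟩)) ∧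
      Submodule.span ℤ (Set.range fun a : Fin (n - v) => barComp (i ⟨v + a.1, by omega⟩)) =
        Submodule.span ℤ (Set.range barComp)) := by
  subst hbarSel hbarComp
  let e : Fin v ⊕ Fin (n - v) ≃ Fin n := finSumFinEquiv.trans (finCongr (Nat.add_sub_cancel' hv))
  let A' := A.submatrix (e.trans i) (e.trans k)
  have hA' : IsUnit A' := (isUnit_submatrix_equiv _ _).mpr ((isUnit_iff_isUnit_det A).mpr hA)
  have horth : (A'ᵀ * A').toBlocks₁₂ = 0 := by
    rw [transpose_submatrix, submatrix_mul_equiv, hdiag, submatrix_diagonal_equiv]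
    exact toBlocks₁₂_diagonal _
  have hsel : range (fun r c => A r (k (Fin.castLE hv c))) = range A'.toCols₁ :=
    ((e.trans i).surjective.range_comp _).symm
  have hcomp : range (fun r (c : Fin (n - v)) => A r (k ⟨v + c.1, by omega⟩)) = range A'.toCols₂ :=
    ((e.trans i).surjective.range_comp _).symm
  rw [hsel, hcomp]
  -- The blocks of `A'` have the rows of the statement, and the `ℤ`-module structure on
  -- `Fin v → ℂ` coming from `Algebra ℤ ℂ` is the canonical one, both definitionally.
  convert isBasicSet_toBlocks₁₁_iff_isBasicSet_toBlocks₂₂ (R := ℤ) hA' horth using 4 <;> rfl
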